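/- In any finite simple undirected graph G, with n_i denoting the number of induced 4-node subgraphs isomorphic to the i-th 4-node motif (M_2 = 3-star, M_4 = paw (triangle plus pendant edge), M_5 = diamond (K_4 minus an edge), M_6 = K_4), the identity Σ_{v∈V} C(d_v, 3) = n_2 + n_4 + 2 n_5 + 4 n_6 holds. -/

import Mathlib

open SimpleGraph

/-- The 3-star `K_{1,3}` (motif `M₂`). -/
def star3 : SimpleGraph (Fin 4) := fromEdgeSet {s(0, 1), s(0, 2), s(0, 3)}

/-- The paw: a triangle `0,1,2` plus pendant edge `0-3` (motif `M₄`). -/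
def paw : SimpleGraph (Fin 4) := fromEdgeSet {s(0, 1), s(0, 2), s(1, 2), s(0, 3)}

/-- The diamond: `K₄` minus the edge `2-3` (motif `M₅`). -/
def diamond : SimpleGraph (Fin 4) :=
  fromEdgeSet {s(0, 1), s(0, 2), s(0, 3), s(1, 2), s(1, 3)}

/-- The number of 4-element vertex subsets of `G` whose induced subgraph is
isomorphic to the motif `M`. -/
noncomputable def inducedCount {V : Type*} [Fintype V] [DecidableEq V]
    (G : SimpleGraph V) (M : SimpleGraph (Fin 4)) : ℕ :=
  Nat.card {S : Finset V // S.card = 4 ∧ Nonempty (G.induce (S : Set V) ≃g M)}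

/-!
Both sides count the pairs `(v, S)` with `S` a set of three neighbours of `v`. Grouping them by
the 4-set `Q = {v} ∪ S`, each `Q` contributes the number of vertices of `G[Q]` adjacent to the
other three, i.e. the number of 3-stars in `G[Q]`. This number is an isomorphism invariant, and a
finite check over the 64 graphs on `Fin 4` shows that it is `1, 1, 2, 4` for the 3-star, the paw,
the diamond and `K₄`, and `0` for every other graph.
-/

open Finset

instance : DecidableRel star3.Adj := by unfold star3; infer_instance
instance : DecidableRel paw.Adj := by unfold paw; infer_instance
instance : DecidableRel diamond.Adj := by unfold diamond; infer_instance

namespace SimpleGraph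

variable {V W : Type*}

theorem nonempty_iso_iff_exists_equiv {H : SimpleGraph V} {M : SimpleGraph W} :
    Nonempty (H ≃g M) ↔ ∃ σ : V ≃ W, ∀ a b, M.Adj (σ a) (σ b) ↔ H.Adj a b :=
  ⟨fun ⟨e⟩ => ⟨e.toEquiv, fun _ _ => e.map_rel_iff⟩, fun ⟨σ, h⟩ => ⟨⟨σ, h _ _⟩⟩⟩

theorem Iso.nonempty_iso_congr_left {H : SimpleGraph V} {H' : SimpleGraph W} {U : Type*}
    {M : SimpleGraph U} (e : H ≃g H') : Nonempty (H ≃g M) ↔ Nonempty (H' ≃g M) :=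
  ⟨fun ⟨f⟩ => ⟨e.symm.trans f⟩, fun ⟨f⟩ => ⟨e.trans f⟩⟩

variable [Fintype V] [DecidableEq V] [Fintype W] [DecidableEq W]

instance (H : SimpleGraph V) (M : SimpleGraph W) [DecidableRel H.Adj] [DecidableRel M.Adj] :
    Decidable (Nonempty (H ≃g M)) :=
  decidable_of_iff _ nonempty_iso_iff_exists_equiv.symm

def universalVertices (H : SimpleGraph V) [DecidableRel H.Adj] : Finset V :=
  {v | ∀ w, w ≠ v → H.Adj v w}

theorem Iso.card_universalVertices_eq {H : SimpleGraph V} {H' : SimpleGraph W}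
    [DecidableRel H.Adj] [DecidableRel H'.Adj] (e : H ≃g H') :
    #H.universalVertices = #H'.universalVertices :=
  card_equiv e.toEquiv fun v => by
    simp [universalVertices, e.surjective.forall, e.map_adj_iff]

theorem card_universalVertices_induce (G : SimpleGraph V) [DecidableRel G.Adj] (Q : Finset V) :
    #(G.induce (Q : Set V)).universalVertices = #{v ∈ Q | ∀ w ∈ Q, w ≠ v → G.Adj v w} := by
  refine card_bij (fun v _ => v.1) ?_ (fun _ _ _ _ => Subtype.ext) ?_
  · rintro ⟨v, hv⟩ huniv
    simpa [universalVertices, mem_coe.mp hv] using huniv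
  · intro v hv
    simp_all [universalVertices]

theorem card_filter_powersetCard_succ_adj (G : SimpleGraph V) [DecidableRel G.Adj] (k : ℕ)
    (v : V) : #{Q ∈ univ.powersetCard (k + 1) | v ∈ Q ∧ ∀ w ∈ Q, w ≠ v → G.Adj v w}
      = (G.degree v).choose k := by
  have hv : v ∉ G.neighborFinset v := by simp
  rw [← card_neighborFinset_eq_degree, ← card_powersetCard]
  refine card_nbij' (·.erase v) (insert v) ?_ ?_ ?_ ?_
  · intro Q hQ
    obtain ⟨hQk, hvQ, hadj⟩ := mem_filter.mp hQ
    refine mem_powersetCard.mpr ⟨fun w hw => ?_, ?_⟩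
    · obtain ⟨hwv, hwQ⟩ := mem_erase.mp hw
      exact (G.mem_neighborFinset v w).mpr (hadj w hwQ hwv)
    · rw [card_erase_of_mem hvQ, (mem_powersetCard_univ.mp hQk), Nat.add_sub_cancel]
  · intro S hS
    obtain ⟨hSN, hSk⟩ := mem_powersetCard.mp hS
    refine mem_filter.mpr ⟨?_, mem_insert_self v S, fun w hw hwv => ?_⟩
    · rw [mem_powersetCard_univ, card_insert_of_notMem (fun h => hv (hSN h)), hSk]
    · exact (G.mem_neighborFinset v w).mp (hSN ((mem_insert.mp hw).resolve_left hwv))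
  · intro Q hQ
    exact insert_erase (mem_filter.mp hQ).2.1
  · intro S hS
    exact erase_insert fun h => hv ((mem_powersetCard.mp hS).1 h)

theorem sum_choose_degree_eq_sum_card_universal (G : SimpleGraph V) [DecidableRel G.Adj] (k : ℕ) :
    ∑ v, (G.degree v).choose k
      = ∑ Q ∈ univ.powersetCard (k + 1), #{v ∈ Q | ∀ w ∈ Q, w ≠ v → G.Adj v w} := by
  calc ∑ v, (G.degree v).choose k
      = ∑ v, #{Q ∈ univ.powersetCard (k + 1) | v ∈ Q ∧ ∀ w ∈ Q, w ≠ v → G.Adj v w} := by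
        simp only [card_filter_powersetCard_succ_adj]
    _ = ∑ Q ∈ univ.powersetCard (k + 1), #{v | v ∈ Q ∧ ∀ w ∈ Q, w ≠ v → G.Adj v w} :=
        sum_card_bipartiteAbove_eq_sum_card_bipartiteBelow _
    _ = _ := by simp only [← filter_filter, filter_univ_mem]

def motifWeight (H : SimpleGraph V) [DecidableRel H.Adj] : ℕ :=
  (if Nonempty (H ≃g star3) then 1 else 0) + (if Nonempty (H ≃g paw) then 1 else 0)
    + 2 * (if Nonempty (H ≃g diamond) then 1 else 0)
    + 4 * (if Nonempty (H ≃g (⊤ : SimpleGraph (Fin 4))) then 1 else 0)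

theorem Iso.motifWeight_eq {H : SimpleGraph V} {H' : SimpleGraph W}
    [DecidableRel H.Adj] [DecidableRel H'.Adj] (e : H ≃g H') : motifWeight H = motifWeight H' := by
  simp only [motifWeight, e.nonempty_iso_congr_left]

theorem card_universalVertices_fromEdgeSet_eq_motifWeight :
    ∀ l ∈ [s(0, 1), s(0, 2), s(0, 3), s(1, 2), s(1, 3), s(2, 3)].sublists,
      #(fromEdgeSet {e : Sym2 (Fin 4) | e ∈ l}).universalVertices
        = motifWeight (fromEdgeSet {e : Sym2 (Fin 4) | e ∈ l}) := by
  decide +kernel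

theorem card_universalVertices_eq_motifWeight_of_fin_four (H : SimpleGraph (Fin 4))
    [DecidableRel H.Adj] : #H.universalVertices = motifWeight H := by
  obtain ⟨l, hl, rfl⟩ : ∃ l ∈ [s(0, 1), s(0, 2), s(0, 3), s(1, 2), s(1, 3), s(2, 3)].sublists,
      fromEdgeSet {e : Sym2 (Fin 4) | e ∈ l} = H := by
    refine ⟨_, List.mem_sublists.mpr (List.filter_sublist (p := (· ∈ H.edgeSet))), ?_⟩
    ext a b
    fin_cases a <;> fin_cases b <;> simp
  convert card_universalVertices_fromEdgeSet_eq_motifWeight l hl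

theorem card_universalVertices_eq_motifWeight (H : SimpleGraph V) [DecidableRel H.Adj]
    (hV : Fintype.card V = 4) : #H.universalVertices = motifWeight H := by
  let e := Iso.comap (Fintype.equivFinOfCardEq hV).symm H
  rw [← e.card_universalVertices_eq, ← e.motifWeight_eq]
  exact card_universalVertices_eq_motifWeight_of_fin_four _

end SimpleGraph

theorem inducedCount_eq_sum_powersetCard {V : Type*} [Fintype V] [DecidableEq V]
    (G : SimpleGraph V) [DecidableRel G.Adj] (M : SimpleGraph (Fin 4)) [DecidableRel M.Adj] :
    inducedCount G M
      = ∑ Q ∈ (univ : Finset V).powersetCard 4,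
          if Nonempty (G.induce (Q : Set V) ≃g M) then 1 else 0 := by
  rw [inducedCount, Nat.card_eq_fintype_card, Fintype.card_subtype, card_filter,
    powersetCard_eq_filter, powerset_univ, sum_filter]
  simp_rw [ite_and]

/-- `∑ᵥ C(dᵥ,3) = n₂ + n₄ + 2 n₅ + 4 n₆`, where `n₂, n₄, n₅, n₆` count induced
4-node subgraphs isomorphic to the 3-star, the paw, the diamond and `K₄`. -/
theorem threeStar_count_decomposition {V : Type*} [Fintype V] [DecidableEq V]
    (G : SimpleGraph V) [DecidableRel G.Adj] :
    ∑ v, (G.degree v).choose 3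
      = inducedCount G star3 + inducedCount G paw
        + 2 * inducedCount G diamond + 4 * inducedCount G (⊤ : SimpleGraph (Fin 4)) := by
  simp only [inducedCount_eq_sum_powersetCard, sum_choose_degree_eq_sum_card_universal G 3, mul_sum,
    ← sum_add_distrib]
  refine sum_congr rfl fun Q hQ => ?_
  rw [← card_universalVertices_induce, card_universalVertices_eq_motifWeight _
    (by simpa using mem_powersetCard_univ.mp hQ)]
  rfl
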